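/- Conditional variance formula: in the fixed-sample setup, for every 2 ≤ ℓ ≤ n, almost surely E[ Y_ℓ² | X₁,…,X_{ℓ−1} ] = (2/(n² E[u₁²])) Σ_{i=1}^{ℓ−1} Σ_{j=1}^{ℓ−1} u_i u_j ⟨S_i,S_j⟩, where Y_ℓ := (√(2(p−1))/(n E[u₁²])) Σ_{i=1}^{ℓ−1} u_i u_ℓ ⟨S_i,S_ℓ⟩. -/

import Mathlib

/-!
Write `v(x) = x - ⟪x, θ⟫ θ`. On the sphere `uᵢ Sᵢ = v(Xᵢ)`, so `Y_ℓ` is a constant multiple of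
`⟪W, X_ℓ⟫`, where `W = ∑_{i<ℓ} v(Xᵢ)` is measurable with respect to the past and orthogonal to
`θ`, and the double sum on the right-hand side is `‖W‖²`. Since `X_ℓ` is independent of the
past, `W` can be frozen: `E[⟪W, X_ℓ⟫² | past] = ∫ ⟪w, x⟫² dμ(x)` at `w = W`. For `w ⊥ θ`
rotational symmetry gives `(p - 1) ∫ ⟪w, x⟫² dμ = ‖w‖² E[u₁²]`: reflections fixing `θ` show that
`∫ ⟪w, x⟫² dμ` depends only on `‖w‖`, and summing over an orthonormal basis of `θ^⊥` yields
`∫ (‖x‖² - ⟪x, θ⟫²) dμ`.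
-/

open MeasureTheory ProbabilityTheory Filter
open scoped BigOperators RealInnerProductSpace

/-- A Borel probability measure on `ℝ^p` is rotationally symmetric about `θ` if it is invariant
under every orthogonal transformation (linear isometry) of `ℝ^p` fixing `θ`. -/
def RotSym {p : ℕ} (θ : EuclideanSpace ℝ (Fin p)) (μ : Measure (EuclideanSpace ℝ (Fin p))) :
    Prop :=
  ∀ O : EuclideanSpace ℝ (Fin p) ≃ₗᵢ[ℝ] EuclideanSpace ℝ (Fin p), O θ = θ →
    Measure.map O μ = μ

section Projection

variable {E : Type*} [NormedAddCommGroup E] [InnerProductSpace ℝ E] {θ : E}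

lemma inner_sub_inner_smul_self_eq_zero (hθ : ‖θ‖ = 1) (x : E) : ⟪x - ⟪x, θ⟫ • θ, θ⟫ = 0 := by
  rw [inner_sub_left, real_inner_smul_left, real_inner_self_eq_norm_sq, hθ]
  ring

lemma inner_sub_inner_smul_right_of_inner_eq_zero {a : E} (ha : ⟪a, θ⟫ = 0) (x : E) :
    ⟪a, x - ⟪x, θ⟫ • θ⟫ = ⟪a, x⟫ := by
  rw [inner_sub_right, real_inner_smul_right, ha, mul_zero, sub_zero]

lemma norm_sub_inner_smul_sq (hθ : ‖θ‖ = 1) (x : E) :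
    ‖x - ⟪x, θ⟫ • θ‖ ^ 2 = ‖x‖ ^ 2 - ⟪x, θ⟫ ^ 2 := by
  rw [norm_sub_sq_real, real_inner_smul_right, norm_smul, hθ, Real.norm_eq_abs, mul_one, sq_abs]
  ring

lemma norm_sub_inner_smul_le (hθ : ‖θ‖ = 1) (x : E) : ‖x - ⟪x, θ⟫ • θ‖ ≤ ‖x‖ := by
  refine (sq_le_sq₀ (norm_nonneg _) (norm_nonneg _)).1 ?_
  rw [norm_sub_inner_smul_sq hθ]
  linarith [sq_nonneg ⟪x, θ⟫]

lemma sqrt_one_sub_inner_sq_eq_norm (hθ : ‖θ‖ = 1) {x : E} (hx : ‖x‖ = 1) :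
    √(1 - ⟪x, θ⟫ ^ 2) = ‖x - ⟪x, θ⟫ • θ‖ := by
  rw [← one_pow 2, ← hx, ← norm_sub_inner_smul_sq hθ, Real.sqrt_sq (norm_nonneg _)]

lemma norm_smul_eq_self_of_imp {v s : E} (h : v ≠ 0 → s = ‖v‖⁻¹ • v) : ‖v‖ • s = v := by
  rcases eq_or_ne v 0 with rfl | hv
  · simp
  · rw [h hv, smul_smul, mul_inv_cancel₀ (norm_ne_zero_iff.2 hv), one_smul]

lemma sqrt_mul_sqrt_mul_inner_eq_inner (hθ : ‖θ‖ = 1) {S : E → E}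
    (hS : ∀ x, x - ⟪x, θ⟫ • θ ≠ 0 → S x = ‖x - ⟪x, θ⟫ • θ‖⁻¹ • (x - ⟪x, θ⟫ • θ))
    {x y : E} (hx : ‖x‖ = 1) (hy : ‖y‖ = 1) :
    √(1 - ⟪x, θ⟫ ^ 2) * √(1 - ⟪y, θ⟫ ^ 2) * ⟪S x, S y⟫ =
      ⟪x - ⟪x, θ⟫ • θ, y - ⟪y, θ⟫ • θ⟫ := by
  conv_rhs => rw [← norm_smul_eq_self_of_imp (hS x), ← norm_smul_eq_self_of_imp (hS y)]
  rw [sqrt_one_sub_inner_sq_eq_norm hθ hx, sqrt_one_sub_inner_sq_eq_norm hθ hy,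
    real_inner_smul_left, real_inner_smul_right, mul_assoc]

variable {ι : Type*} {s : Finset ι} {x : ι → E}

lemma sum_sqrt_mul_sqrt_mul_inner_eq_inner_sum (hθ : ‖θ‖ = 1) {S : E → E}
    (hS : ∀ x, x - ⟪x, θ⟫ • θ ≠ 0 → S x = ‖x - ⟪x, θ⟫ • θ‖⁻¹ • (x - ⟪x, θ⟫ • θ))
    (hx : ∀ i ∈ s, ‖x i‖ = 1) {y : E} (hy : ‖y‖ = 1) :
    ∑ i ∈ s, √(1 - ⟪x i, θ⟫ ^ 2) * √(1 - ⟪y, θ⟫ ^ 2) * ⟪S (x i), S y⟫ =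
      ⟪∑ i ∈ s, (x i - ⟪x i, θ⟫ • θ), y⟫ := by
  rw [sum_inner]
  refine Finset.sum_congr rfl fun i hi => ?_
  rw [sqrt_mul_sqrt_mul_inner_eq_inner hθ hS (hx i hi) hy,
    inner_sub_inner_smul_right_of_inner_eq_zero (inner_sub_inner_smul_self_eq_zero hθ _)]

lemma sum_sum_sqrt_mul_sqrt_mul_inner_eq_norm_sq (hθ : ‖θ‖ = 1) {S : E → E}
    (hS : ∀ x, x - ⟪x, θ⟫ • θ ≠ 0 → S x = ‖x - ⟪x, θ⟫ • θ‖⁻¹ • (x - ⟪x, θ⟫ • θ))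
    (hx : ∀ i ∈ s, ‖x i‖ = 1) :
    ∑ i ∈ s, ∑ j ∈ s, √(1 - ⟪x i, θ⟫ ^ 2) * √(1 - ⟪x j, θ⟫ ^ 2) * ⟪S (x i), S (x j)⟫ =
      ‖∑ i ∈ s, (x i - ⟪x i, θ⟫ • θ)‖ ^ 2 := by
  rw [← real_inner_self_eq_norm_sq, sum_inner]
  refine Finset.sum_congr rfl fun i hi => ?_
  rw [inner_sum]
  exact Finset.sum_congr rfl fun j hj => sqrt_mul_sqrt_mul_inner_eq_inner hθ hS (hx i hi) (hx j hj)

lemma norm_sum_sub_inner_smul_le_card (hθ : ‖θ‖ = 1) (hx : ∀ i ∈ s, ‖x i‖ = 1) :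
    ‖∑ i ∈ s, (x i - ⟪x i, θ⟫ • θ)‖ ≤ s.card :=
  (norm_sum_le _ _).trans <| by
    simpa using Finset.sum_le_sum fun i hi => (norm_sub_inner_smul_le hθ (x i)).trans (hx i hi).le

end Projection

section RotSym

variable {p : ℕ} {θ : EuclideanSpace ℝ (Fin p)} {μ : Measure (EuclideanSpace ℝ (Fin p))}

/-- The reflection exchanging `a` and `b` fixes `θ`. -/
lemma RotSym.integral_inner_sq_eq (hμ : RotSym θ μ) {a b : EuclideanSpace ℝ (Fin p)}
    (ha : ⟪a, θ⟫ = 0) (hb : ⟪b, θ⟫ = 0) (hab : ‖a‖ = ‖b‖) :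
    ∫ x, ⟪a, x⟫ ^ 2 ∂μ = ∫ x, ⟪b, x⟫ ^ 2 ∂μ := by
  set O := Submodule.reflection (ℝ ∙ (a - b))ᗮ
  have hOθ : O θ = θ := Submodule.reflection_mem_subspace_eq_self <|
    Submodule.mem_orthogonal_singleton_iff_inner_right.2 <| by rw [inner_sub_left, ha, hb, sub_zero]
  calc ∫ x, ⟪a, x⟫ ^ 2 ∂μ = ∫ x, ⟪O a, O x⟫ ^ 2 ∂μ := by
        simp only [LinearIsometryEquiv.inner_map_map]
    _ = ∫ y, ⟪O a, y⟫ ^ 2 ∂(μ.map O) := by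
      rw [integral_map O.continuous.aemeasurable
        ((continuous_const.inner continuous_id).pow 2).aestronglyMeasurable]
    _ = ∫ x, ⟪b, x⟫ ^ 2 ∂μ := by rw [hμ O hOθ, Submodule.reflection_sub hab]

lemma exists_orthonormalBasis_apply_zero_eq {F : Type*} [NormedAddCommGroup F]
    [InnerProductSpace ℝ F] {q : ℕ} (hF : Module.finrank ℝ F = q + 1) {θ : F} (hθ : ‖θ‖ = 1) :
    ∃ b : OrthonormalBasis (Fin (q + 1)) ℝ F, b 0 = θ := by
  have : FiniteDimensional ℝ F := .of_finrank_eq_succ hF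
  have hv : Orthonormal ℝ (({0} : Set (Fin (q + 1))).domRestrict fun _ => θ) :=
    ⟨fun _ => hθ, fun i j hij => absurd (Subsingleton.elim i j) hij⟩
  obtain ⟨b, hb⟩ := hv.exists_orthonormalBasis_extension_of_card_eq (by simpa using hF)
  exact ⟨b, hb 0 rfl⟩

lemma RotSym.sub_one_mul_integral_inner_sq (hμ : RotSym θ μ) (hθ : ‖θ‖ = 1) (h2 : MemLp id 2 μ)
    {a : EuclideanSpace ℝ (Fin p)} (ha : ⟪a, θ⟫ = 0) :
    ((p : ℝ) - 1) * ∫ x, ⟪a, x⟫ ^ 2 ∂μ = ‖a‖ ^ 2 * ∫ x, (‖x‖ ^ 2 - ⟪x, θ⟫ ^ 2) ∂μ := by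
  obtain ⟨q, rfl⟩ : ∃ q, p = q + 1 :=
    Nat.exists_eq_succ_of_ne_zero (by rintro rfl; simp [Subsingleton.elim θ 0] at hθ)
  obtain ⟨b, hb0⟩ := exists_orthonormalBasis_apply_zero_eq finrank_euclideanSpace_fin hθ
  have hperp (k : Fin q) : ⟪b k.succ, θ⟫ = 0 := hb0 ▸ b.orthonormal.2 (Fin.succ_ne_zero k)
  have hsum (x : EuclideanSpace ℝ (Fin (q + 1))) :
      ‖x‖ ^ 2 - ⟪x, θ⟫ ^ 2 = ∑ k : Fin q, ⟪b k.succ, x⟫ ^ 2 := by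
    rw [← b.sum_sq_inner_right x, Fin.sum_univ_succ, hb0, real_inner_comm]
    ring
  have hscale (k : Fin q) : ‖a‖ ^ 2 * ∫ x, ⟪b k.succ, x⟫ ^ 2 ∂μ = ∫ x, ⟪a, x⟫ ^ 2 ∂μ := by
    have hnorm : ‖‖a‖ • b k.succ‖ = ‖a‖ := by
      rw [norm_smul, b.orthonormal.1, mul_one, norm_norm]
    rw [hμ.integral_inner_sq_eq ha (by rw [real_inner_smul_left, hperp, mul_zero]) hnorm.symm,
      ← integral_const_mul]
    simp only [real_inner_smul_left, mul_pow]
  simp_rw [hsum]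
  rw [integral_finsetSum _ fun k _ => (h2.const_inner (b k.succ)).integrable_sq, Finset.mul_sum,
    Finset.sum_congr rfl fun k _ => hscale k]
  simp

end RotSym
section Conditional

variable {Ω : Type*} {m m' : MeasurableSpace Ω} [mΩ : MeasurableSpace Ω] {P : Measure Ω}

lemma integrable_comp_of_norm_le {G : Type*} [NormedAddCommGroup G] [ProperSpace G]
    [MeasurableSpace G] [OpensMeasurableSpace G] [IsFiniteMeasure P] {F : G → ℝ}
    (hF : Continuous F) {W : Ω → G} (hW : AEMeasurable W P) {C : ℝ} (hC : ∀ ω, ‖W ω‖ ≤ C) :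
    Integrable (fun ω => F (W ω)) P := by
  obtain ⟨K, hK⟩ := (isCompact_closedBall (0 : G) C).exists_bound_of_continuousOn hF.continuousOn
  exact .of_bound (hF.measurable.comp_aemeasurable hW).aestronglyMeasurable K
    (ae_of_all _ fun ω => hK _ (mem_closedBall_zero_iff.2 (hC ω)))

variable {E : Type*} [NormedAddCommGroup E] [InnerProductSpace ℝ E] [FiniteDimensional ℝ E]
  [MeasurableSpace E] [BorelSpace E]

lemma condExp_mul_of_indep (hm : m ≤ mΩ) (hm' : m' ≤ mΩ) [SigmaFinite (P.trim hm)]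
    {g h : Ω → ℝ} (hg : StronglyMeasurable[m] g) (hh : StronglyMeasurable[m'] h)
    (hind : Indep m' m P) (hgh : Integrable (g * h) P) (hhi : Integrable h P) :
    P[g * h | m] =ᵐ[P] fun ω => g ω * ∫ ω', h ω' ∂P := by
  filter_upwards [condExp_mul_of_stronglyMeasurable_left hg hgh hhi,
    condExp_indep_eq hm' hm hh hind] with ω h₁ h₂
  rw [h₁, Pi.mul_apply, h₂]

/-- Expanding `⟪w, x⟫ ^ 2` in an orthonormal basis separates the `m`-measurable factor `W` from
the independent factor `V`, so that `W` may be frozen in the conditional expectation. -/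
lemma condExp_inner_sq_of_indep [IsFiniteMeasure P] (hm : m ≤ mΩ) {W V : Ω → E}
    (hW : Measurable[m] W) (hV : Measurable V) (hind : Indep (.comap V inferInstance) m P)
    {C D : ℝ} (hWC : ∀ ω, ‖W ω‖ ≤ C) (hVD : ∀ ω, ‖V ω‖ ≤ D) :
    P[fun ω => ⟪W ω, V ω⟫ ^ 2 | m] =ᵐ[P] fun ω => ∫ ω', ⟪W ω, V ω'⟫ ^ 2 ∂P := by
  set b := stdOrthonormalBasis ℝ E
  set g : _ × _ → E → ℝ := fun q w => ⟪w, b q.1⟫ * ⟪w, b q.2⟫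
  set h : _ × _ → E → ℝ := fun q x => ⟪b q.1, x⟫ * ⟪b q.2, x⟫
  have hg (q) : Continuous (g q) := by fun_prop
  have hh (q) : Continuous (h q) := by fun_prop
  have hexp (w x : E) : ⟪w, x⟫ ^ 2 = ∑ q, g q w * h q x := by
    rw [← b.sum_inner_mul_inner w x, sq, Finset.sum_mul_sum, ← Fintype.sum_prod_type']
    exact Finset.sum_congr rfl fun q _ => by ring
  have hint (q) : Integrable (fun ω => g q (W ω) * h q (V ω)) P :=
    integrable_comp_of_norm_le (F := fun z : E × E => g q z.1 * h q z.2) (by fun_prop)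
      ((hW.mono hm le_rfl).prodMk hV).aemeasurable
      fun ω => max_le_max (hWC ω) (hVD ω)
  have hterm (q) : P[fun ω => g q (W ω) * h q (V ω) | m] =ᵐ[P]
      fun ω => g q (W ω) * ∫ ω', h q (V ω') ∂P :=
    condExp_mul_of_indep hm hV.comap_le ((hg q).measurable.comp hW).stronglyMeasurable
      ((hh q).measurable.comp (comap_measurable V)).stronglyMeasurable hind (hint q)
      (integrable_comp_of_norm_le (hh q) hV.aemeasurable hVD)
  have hsum : P[fun ω => ⟪W ω, V ω⟫ ^ 2 | m] =ᵐ[P]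
      ∑ q, P[fun ω => g q (W ω) * h q (V ω) | m] := by
    simp_rw [hexp, ← Finset.sum_fn]
    exact condExp_finsetSum (fun q _ => hint q) m
  filter_upwards [hsum, ae_all_iff.2 hterm] with ω h₁ h₂
  simp_rw [h₁, Finset.sum_apply, h₂, hexp]
  rw [integral_finsetSum _ fun q _ => ?_]
  · simp_rw [integral_const_mul]
  · exact (integrable_comp_of_norm_le (hh q) hV.aemeasurable hVD).const_mul _

end Conditional

section Sample

lemma measurable_iSup_comap {Ω ι β : Type*} [MeasurableSpace β] {X : ι → Ω → β} {s : Finset ι}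
    {i : ι} (hi : i ∈ s) : Measurable[⨆ j ∈ s, .comap (X j) inferInstance] (X i) :=
  measurable_iff_comap_le.2 <|
    le_iSup₂ (f := fun j (_ : j ∈ s) => MeasurableSpace.comap (X j) inferInstance) i hi

variable {Ω : Type*} {m : MeasurableSpace Ω} [mΩ : MeasurableSpace Ω] {P : Measure Ω}

lemma iSup_comap_le {ι β : Type*} [MeasurableSpace β] {X : ι → Ω → β} {s : Finset ι}
    (hX : ∀ i ∈ s, Measurable (X i)) : ⨆ i ∈ s, .comap (X i) inferInstance ≤ mΩ :=
  iSup₂_le fun i hi => (hX i hi).comap_le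

lemma integral_sqrt_one_sub_inner_sq_sq {p : ℕ} {θ : EuclideanSpace ℝ (Fin p)} (hθ : ‖θ‖ = 1)
    {Z : Ω → EuclideanSpace ℝ (Fin p)} (hZ : Measurable Z) (hZ₁ : ∀ ω, ‖Z ω‖ = 1) :
    ∫ ω, √(1 - ⟪Z ω, θ⟫ ^ 2) ^ 2 ∂P = ∫ x, (‖x‖ ^ 2 - ⟪x, θ⟫ ^ 2) ∂(P.map Z) := by
  rw [integral_map hZ.aemeasurable (by fun_prop)]
  simp_rw [sqrt_one_sub_inner_sq_eq_norm hθ (hZ₁ _), norm_sub_inner_smul_sq hθ]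

lemma ProbabilityTheory.iIndepFun.indep_comap_iSup_comap {ι β : Type*} [MeasurableSpace β]
    {f : ι → Ω → β} (h : iIndepFun f P) (hf : ∀ i, Measurable (f i)) {j : ι} {S : Set ι}
    (hj : j ∉ S) :
    Indep (.comap (f j) inferInstance) (⨆ i ∈ S, .comap (f i) inferInstance) P := by
  refine indep_of_indep_of_le_left (indep_iSup_of_disjoint (fun i => (hf i).comap_le) h
    (Set.disjoint_singleton_left.2 hj)) ?_
  exact le_iSup₂ (f := fun i (_ : i ∈ ({j} : Set ι)) => MeasurableSpace.comap (f i) inferInstance)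
    j rfl

lemma indep_comap_iSup_comap_Icc {β : Type*} [MeasurableSpace β] {X : ℕ → Ω → β} {n ℓ : ℕ}
    (hX : ∀ i, 1 ≤ i → i ≤ n → Measurable (X i))
    (hind : iIndepFun (fun i : Fin n => X (i + 1)) P) (hℓ : 1 ≤ ℓ) (hℓn : ℓ ≤ n) :
    Indep (.comap (X ℓ) inferInstance)
      (⨆ i ∈ Finset.Icc 1 (ℓ - 1), .comap (X i) inferInstance) P := by
  have key := hind.indep_comap_iSup_comap (fun k => hX _ le_add_self k.isLt)
    (j := ⟨ℓ - 1, by omega⟩) (S := {k | (k : ℕ) + 1 < ℓ}) (by simp only [Set.mem_ofPred_eq]; omega)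
  simp only [Nat.sub_add_cancel hℓ] at key
  refine indep_of_indep_of_le_right key (iSup₂_le fun i hi => ?_)
  obtain ⟨hi₁, hi₂⟩ := Finset.mem_Icc.1 hi
  have := le_iSup₂ (f := fun (k : Fin n) (_ : k ∈ {k : Fin n | (k : ℕ) + 1 < ℓ}) =>
    MeasurableSpace.comap (X (k + 1)) inferInstance) ⟨i - 1, by omega⟩
    (by simp only [Set.mem_ofPred_eq]; omega)
  simpa [Nat.sub_add_cancel hi₁] using this

lemma condExp_inner_sq_of_indep_of_rotSym [IsFiniteMeasure P] (hm : m ≤ mΩ) {p : ℕ} (hp : 2 ≤ p)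
    {θ : EuclideanSpace ℝ (Fin p)} (hθ : ‖θ‖ = 1)
    {μ : Measure (EuclideanSpace ℝ (Fin p))} (hμ : RotSym θ μ)
    {W V : Ω → EuclideanSpace ℝ (Fin p)} (hW : Measurable[m] W) (hWθ : ∀ ω, ⟪W ω, θ⟫ = 0)
    {C D : ℝ} (hWC : ∀ ω, ‖W ω‖ ≤ C) (hV : Measurable V) (hVμ : P.map V = μ)
    (hVD : ∀ ω, ‖V ω‖ ≤ D) (hind : Indep (.comap V inferInstance) m P) :
    P[fun ω => ⟪W ω, V ω⟫ ^ 2 | m] =ᵐ[P]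
      fun ω => ((p : ℝ) - 1)⁻¹ * ‖W ω‖ ^ 2 * ∫ x, (‖x‖ ^ 2 - ⟪x, θ⟫ ^ 2) ∂μ := by
  have hp₁ : (p : ℝ) - 1 ≠ 0 := by
    have : (2 : ℝ) ≤ p := by exact_mod_cast hp
    linarith
  have h2 : MemLp id 2 μ := hVμ ▸ (memLp_map_measure_iff aestronglyMeasurable_id
    hV.aemeasurable).2 (.of_bound hV.aestronglyMeasurable D (ae_of_all _ hVD))
  filter_upwards [condExp_inner_sq_of_indep hm hW hV hind hWC hVD] with ω hω
  rw [hω, mul_assoc, ← hμ.sub_one_mul_integral_inner_sq hθ h2 (hWθ ω), inv_mul_cancel_left₀ hp₁,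
    ← hVμ, integral_map hV.aemeasurable (by fun_prop)]

end Sample

theorem statement_9_general
    {Ω : Type*} [MeasurableSpace Ω] (P : Measure Ω) [IsProbabilityMeasure P]
    (p n : ℕ) (hp : 2 ≤ p)
    (θ : EuclideanSpace ℝ (Fin p)) (hθ : ‖θ‖ = 1)
    -- the observations `X i`, `1 ≤ i ≤ n`
    (X : ℕ → Ω → EuclideanSpace ℝ (Fin p))
    (hXmeas : ∀ i, 1 ≤ i → i ≤ n → Measurable (X i))
    (hXsph : ∀ i, 1 ≤ i → i ≤ n → ∀ ω, ‖X i ω‖ = 1)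
    -- i.i.d. observations with common rotationally symmetric distribution about `θ`
    (hXindep : iIndepFun
      (fun i : Fin n => X ((i : ℕ) + 1)) P)
    (hXid : ∀ i, 1 ≤ i → i ≤ n → Measure.map (X i) P = Measure.map (X 1) P)
    (hXrot : RotSym θ (Measure.map (X 1) P))
    -- the sign map `Sg`: a fixed measurable choice, equal to the normalized projection of `x`
    -- on the orthogonal complement of `θ` whenever `x ≠ ±θ`
    (Sg : EuclideanSpace ℝ (Fin p) → EuclideanSpace ℝ (Fin p))
    (hSg : ∀ x, x - ⟪x, θ⟫ • θ ≠ 0 →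
      Sg x = ‖x - ⟪x, θ⟫ • θ‖⁻¹ • (x - ⟪x, θ⟫ • θ))
    -- `u i ω = u(X_i(ω))`
    (u : ℕ → Ω → ℝ)
    (hu : ∀ i ω, u i ω = Real.sqrt (1 - ⟪X i ω, θ⟫ ^ 2))
    -- the moments `E[u₁²]` and `E[u₁⁴]`
    (Eu2 : ℝ)
    (hEu2 : Eu2 = ∫ ω, (u 1 ω) ^ 2 ∂P)
    -- the martingale differences `Y_ℓ`
    (Y : ℕ → Ω → ℝ)
    (hY : ∀ ℓ ω, Y ℓ ω =
      Real.sqrt (2 * ((p : ℝ) - 1)) / (n * Eu2) *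
        ∑ i ∈ Finset.Icc 1 (ℓ - 1),
          u i ω * u ℓ ω * ⟪Sg (X i ω), Sg (X ℓ ω)⟫)
    -- the σ-algebra generated by `X₁,…,X_{ℓ−1}`
    (𝔪 : ℕ → MeasurableSpace Ω)
    (h𝔪 : ∀ ℓ, 𝔪 ℓ = ⨆ i ∈ Finset.Icc 1 (ℓ - 1),
      MeasurableSpace.comap (X i) inferInstance)
    (ℓ : ℕ) (hℓ : 2 ≤ ℓ) (hℓn : ℓ ≤ n) :
    P[fun ω => (Y ℓ ω) ^ 2 | 𝔪 ℓ]
      =ᵐ[P] fun ω =>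
        2 / ((n : ℝ) ^ 2 * Eu2) *
          ∑ i ∈ Finset.Icc 1 (ℓ - 1), ∑ j ∈ Finset.Icc 1 (ℓ - 1),
            u i ω * u j ω * ⟪Sg (X i ω), Sg (X j ω)⟫ := by
  have hℓ₁ : 1 ≤ ℓ := by omega
  have hIcc {i} (hi : i ∈ Finset.Icc 1 (ℓ - 1)) : 1 ≤ i ∧ i ≤ n := by
    rw [Finset.mem_Icc] at hi; omega
  have hsph (ω) : ∀ i ∈ Finset.Icc 1 (ℓ - 1), ‖X i ω‖ = 1 :=
    fun i hi => hXsph i (hIcc hi).1 (hIcc hi).2 ω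
  set c := √(2 * ((p : ℝ) - 1)) / (n * Eu2)
  set W : Ω → EuclideanSpace ℝ (Fin p) :=
    fun ω => c • ∑ i ∈ Finset.Icc 1 (ℓ - 1), (X i ω - ⟪X i ω, θ⟫ • θ)
  have hYW (ω) : Y ℓ ω = ⟪W ω, X ℓ ω⟫ := by
    rw [hY, real_inner_smul_left]
    simp_rw [hu]
    rw [sum_sqrt_mul_sqrt_mul_inner_eq_inner_sum hθ hSg (hsph ω) (hXsph ℓ hℓ₁ hℓn ω)]
  have hWθ (ω) : ⟪W ω, θ⟫ = 0 := by
    simp only [W, real_inner_smul_left, sum_inner, inner_sub_inner_smul_self_eq_zero hθ,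
      Finset.sum_const_zero, mul_zero]
  have hW (ω) : ‖W ω‖ ≤ ‖c‖ * (Finset.Icc 1 (ℓ - 1)).card := by
    rw [norm_smul]
    exact mul_le_mul_of_nonneg_left (norm_sum_sub_inner_smul_le_card hθ (hsph ω)) (norm_nonneg c)
  have hXm {i} (hi : i ∈ Finset.Icc 1 (ℓ - 1)) : Measurable[𝔪 ℓ] (X i) :=
    h𝔪 ℓ ▸ measurable_iSup_comap hi
  have hWm : Measurable[𝔪 ℓ] W := (Finset.measurable_sum _ fun i hi =>
    (hXm hi).sub (((hXm hi).inner measurable_const).smul_const θ)).const_smul c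
  have hcond := condExp_inner_sq_of_indep_of_rotSym
    (h𝔪 ℓ ▸ iSup_comap_le fun i hi => hXmeas i (hIcc hi).1 (hIcc hi).2) hp hθ hXrot hWm hWθ hW
    (hXmeas ℓ hℓ₁ hℓn) (hXid ℓ hℓ₁ hℓn) (fun ω => (hXsph ℓ hℓ₁ hℓn ω).le)
    (h𝔪 ℓ ▸ indep_comap_iSup_comap_Icc hXmeas hXindep hℓ₁ hℓn)
  have hEu2' : ∫ x, (‖x‖ ^ 2 - ⟪x, θ⟫ ^ 2) ∂(P.map (X 1)) = Eu2 := by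
    simp_rw [hEu2, hu]
    exact (integral_sqrt_one_sub_inner_sq_sq hθ (hXmeas 1 le_rfl (by omega))
      (hXsph 1 le_rfl (by omega))).symm
  have hp₁ : (1 : ℝ) < p := by exact_mod_cast hp
  simp_rw [hYW]
  filter_upwards [hcond] with ω hω
  simp_rw [hu]
  rw [hω, hEu2', sum_sum_sqrt_mul_sqrt_mul_inner_eq_norm_sq hθ hSg (hsph ω), norm_smul, mul_pow,
    Real.norm_eq_abs, sq_abs, div_pow, Real.sq_sqrt (by linarith)]
  field_simp [sub_ne_zero.2 hp₁.ne']

/-- Conditional variance formula: in the fixed-sample setup, for `2 ≤ ℓ ≤ n`, almost surely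
`E[Y_ℓ² | X₁,…,X_{ℓ−1}] = (2/(n² E[u₁²])) Σ_{i,j=1}^{ℓ−1} uᵢuⱼ⟨Sᵢ,Sⱼ⟩`. -/
theorem statement_9
    {Ω : Type*} [MeasurableSpace Ω] (P : Measure Ω) [IsProbabilityMeasure P]
    (p n : ℕ) (hp : 2 ≤ p) (hn : 2 ≤ n)
    (θ : EuclideanSpace ℝ (Fin p)) (hθ : ‖θ‖ = 1)
    -- the observations `X i`, `1 ≤ i ≤ n`
    (X : ℕ → Ω → EuclideanSpace ℝ (Fin p))
    (hXmeas : ∀ i, 1 ≤ i → i ≤ n → Measurable (X i))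
    (hXsph : ∀ i, 1 ≤ i → i ≤ n → ∀ ω, ‖X i ω‖ = 1)
    -- i.i.d. observations with common rotationally symmetric distribution about `θ`
    (hXindep : iIndepFun
      (fun i : Fin n => X ((i : ℕ) + 1)) P)
    (hXid : ∀ i, 1 ≤ i → i ≤ n → Measure.map (X i) P = Measure.map (X 1) P)
    (hXrot : RotSym θ (Measure.map (X 1) P))
    -- the sign map `Sg`: a fixed measurable choice, equal to the normalized projection of `x`
    -- on the orthogonal complement of `θ` whenever `x ≠ ±θ`
    (Sg : EuclideanSpace ℝ (Fin p) → EuclideanSpace ℝ (Fin p))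
    (hSgmeas : Measurable Sg)
    (hSg : ∀ x, x - ⟪x, θ⟫ • θ ≠ 0 →
      Sg x = ‖x - ⟪x, θ⟫ • θ‖⁻¹ • (x - ⟪x, θ⟫ • θ))
    (hSgunit : ∀ x, ‖Sg x‖ = 1)
    (hSgperp : ∀ x, ⟪Sg x, θ⟫ = 0)
    -- `u i ω = u(X_i(ω))`
    (u : ℕ → Ω → ℝ)
    (hu : ∀ i ω, u i ω = Real.sqrt (1 - ⟪X i ω, θ⟫ ^ 2))
    -- the moments `E[u₁²]` and `E[u₁⁴]`
    (Eu2 Eu4 : ℝ)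
    (hEu2 : Eu2 = ∫ ω, (u 1 ω) ^ 2 ∂P)
    (hEu4 : Eu4 = ∫ ω, (u 1 ω) ^ 4 ∂P)
    (hEu2pos : 0 < Eu2)
    -- the martingale differences `Y_ℓ`
    (Y : ℕ → Ω → ℝ)
    (hY : ∀ ℓ ω, Y ℓ ω =
      Real.sqrt (2 * ((p : ℝ) - 1)) / (n * Eu2) *
        ∑ i ∈ Finset.Icc 1 (ℓ - 1),
          u i ω * u ℓ ω * ⟪Sg (X i ω), Sg (X ℓ ω)⟫)
    -- the σ-algebra generated by `X₁,…,X_{ℓ−1}`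
    (𝔪 : ℕ → MeasurableSpace Ω)
    (h𝔪 : ∀ ℓ, 𝔪 ℓ = ⨆ i ∈ Finset.Icc 1 (ℓ - 1),
      MeasurableSpace.comap (X i) inferInstance)
    (ℓ : ℕ) (hℓ : 2 ≤ ℓ) (hℓn : ℓ ≤ n) :
    P[fun ω => (Y ℓ ω) ^ 2 | 𝔪 ℓ]
      =ᵐ[P] fun ω =>
        2 / ((n : ℝ) ^ 2 * Eu2) *
          ∑ i ∈ Finset.Icc 1 (ℓ - 1), ∑ j ∈ Finset.Icc 1 (ℓ - 1),
            u i ω * u j ω * ⟪Sg (X i ω), Sg (X j ω)⟫ :=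
  statement_9_general P p n hp θ hθ X hXmeas hXsph hXindep hXid hXrot Sg hSg u hu Eu2 hEu2 Y hY 𝔪 h𝔪
    ℓ hℓ hℓn
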